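/- The diagonal matrix element of the potential correction against the zero-energy eigenfunction evaluates exactly: ∫₀^∞ ( −12 R²(1−R²)/(1+R²)³ ) φ₀(R)² dR = 1/10. Consequently, dividing by ‖φ₀‖² = 1/6, the entry 𝒥_{ee} of the operator 𝒥 equals 3/5. -/

import Mathlib

/-!
On `(0, ∞)` we have `φ₀² = R⁵/(1+R²)⁴`, so the integrand is the rational function
`−12 R⁷(1−R²)/(1+R²)⁷`. Written in the variable `u = (1+R²)⁻¹`, it has the polynomial primitive
`−3u² + 10u³ − 27/2 u⁴ + 42/5 u⁵ − 2u⁶`, which vanishes at `u = 0` (i.e. `R → ∞`) and equals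
`−1/10` at `u = 1` (i.e. `R = 0`). The integrand is `O((1+R²)⁻¹)`, hence integrable, and the
fundamental theorem of calculus on `(0, ∞)` gives `1/10`.
-/

/-- The zero-energy eigenfunction `φ₀(R) = R^{5/2}/(1+R²)²`. -/
noncomputable def phi0 (R : ℝ) : ℝ := R ^ ((5 : ℝ) / 2) / (1 + R ^ 2) ^ 2

open MeasureTheory Set Filter Topology

lemma phi0_sq {R : ℝ} (hR : 0 ≤ R) : phi0 R ^ 2 = R ^ 5 / (1 + R ^ 2) ^ 4 := by
  have h : (R ^ ((5 : ℝ) / 2)) ^ 2 = R ^ 5 := by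
    rw [← Real.rpow_mul_natCast hR, ← Real.rpow_natCast R 5]
    norm_num
  rw [phi0, div_pow, h, ← pow_mul]

namespace PotentialCorrection

noncomputable def density (R : ℝ) : ℝ := R ^ 7 * (1 - R ^ 2) / (1 + R ^ 2) ^ 7

noncomputable def primitivePoly (u : ℝ) : ℝ :=
  -3 * u ^ 2 + 10 * u ^ 3 - 27 / 2 * u ^ 4 + 42 / 5 * u ^ 5 - 2 * u ^ 6

noncomputable def primitive (R : ℝ) : ℝ := primitivePoly (1 + R ^ 2)⁻¹

lemma hasDerivAt_primitivePoly (u : ℝ) :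
    HasDerivAt primitivePoly
      (-6 * u + 30 * u ^ 2 - 54 * u ^ 3 + 42 * u ^ 4 - 12 * u ^ 5) u := by
  have h := (((((hasDerivAt_pow 2 u).const_mul (-3 : ℝ)).add
    ((hasDerivAt_pow 3 u).const_mul (10 : ℝ))).sub
    ((hasDerivAt_pow 4 u).const_mul (27 / 2 : ℝ))).add
    ((hasDerivAt_pow 5 u).const_mul (42 / 5 : ℝ))).sub
    ((hasDerivAt_pow 6 u).const_mul (2 : ℝ))
  exact h.congr_deriv (by norm_num; ring)

lemma hasDerivAt_primitive (R : ℝ) : HasDerivAt primitive (-12 * density R) R := by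
  have hne : 1 + R ^ 2 ≠ 0 := by positivity
  have hu : HasDerivAt (fun R : ℝ ↦ (1 + R ^ 2)⁻¹) (-(2 * R) / (1 + R ^ 2) ^ 2) R :=
    (((hasDerivAt_pow 2 R).const_add 1).inv hne).congr_deriv (by norm_num)
  refine ((hasDerivAt_primitivePoly _).comp R hu).congr_deriv ?_
  unfold density
  field_simp
  ring

lemma tendsto_primitive_atTop : Tendsto primitive atTop (𝓝 0) := by
  have hu : Tendsto (fun R : ℝ ↦ (1 + R ^ 2)⁻¹) atTop (𝓝 0) :=
    tendsto_inv_atTop_zero.comp <|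
      tendsto_atTop_add_const_left _ _ (tendsto_pow_atTop two_ne_zero)
  have hp : Tendsto primitivePoly (𝓝 0) (𝓝 0) := by
    simpa [primitivePoly] using
      (show Continuous primitivePoly by unfold primitivePoly; fun_prop).tendsto 0
  exact hp.comp hu

lemma primitive_zero : primitive 0 = -1 / 10 := by
  norm_num [primitive, primitivePoly]

lemma abs_density_le (R : ℝ) : |density R| ≤ (1 + R ^ 2)⁻¹ := by
  have hR : |R| ≤ 1 + R ^ 2 := by nlinarith [sq_abs R, sq_nonneg (|R| - 1)]
  have h7 : |R| ^ 7 ≤ (1 + R ^ 2) ^ 4 :=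
    calc |R| ^ 7 = |R| * (R ^ 2) ^ 3 := by rw [← sq_abs]; ring
      _ ≤ (1 + R ^ 2) * (1 + R ^ 2) ^ 3 := by gcongr; linarith
      _ = (1 + R ^ 2) ^ 4 := by ring
  have h1 : |1 - R ^ 2| ≤ 1 + R ^ 2 := by
    rw [abs_le]; constructor <;> nlinarith [sq_nonneg R]
  have hone : 1 ≤ 1 + R ^ 2 := by nlinarith [sq_nonneg R]
  rw [density, abs_div, abs_mul, abs_pow, abs_of_pos (by positivity : (0 : ℝ) < (1 + R ^ 2) ^ 7),
    div_le_iff₀ (by positivity)]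
  calc |R| ^ 7 * |1 - R ^ 2| ≤ (1 + R ^ 2) ^ 4 * (1 + R ^ 2) := by gcongr
    _ = (1 + R ^ 2) ^ 5 := by ring
    _ ≤ (1 + R ^ 2) ^ 6 := pow_le_pow_right₀ hone (by norm_num)
    _ = (1 + R ^ 2)⁻¹ * (1 + R ^ 2) ^ 7 := by field_simp

lemma integrable_density : Integrable density := by
  refine integrable_inv_one_add_sq.mono' ?_ (.of_forall fun R ↦ abs_density_le R)
  exact (Continuous.div (by fun_prop) (by fun_prop) fun R ↦ by positivity).aestronglyMeasurable

end PotentialCorrection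

open PotentialCorrection in
theorem potential_correction_matrix_element :
    (∫ R in Set.Ioi (0 : ℝ),
        (-12 * R ^ 2 * (1 - R ^ 2) / (1 + R ^ 2) ^ 3) * (phi0 R) ^ 2) = 1 / 10 ∧
    (1 / 10 : ℝ) / (1 / 6) = 3 / 5 := by
  have hintegrand : EqOn (fun R ↦ (-12 * R ^ 2 * (1 - R ^ 2) / (1 + R ^ 2) ^ 3) * (phi0 R) ^ 2)
      (fun R ↦ -12 * density R) (Ioi 0) := fun R hR ↦ by
    simp only [phi0_sq hR.le, density]
    field_simp
  refine ⟨?_, by norm_num⟩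
  rw [setIntegral_congr_fun measurableSet_Ioi hintegrand,
    integral_Ioi_of_hasDerivAt_of_tendsto' (fun R _ ↦ hasDerivAt_primitive R)
      (integrable_density.const_mul _).integrableOn tendsto_primitive_atTop, primitive_zero]
  norm_num
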